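/- arXiv:2509.15165 — 3 statements merged into one kernel-verified Lean document; each statement's English description precedes it below -/
import Mathlib

section
/- Every copula model satisfies Invariant Aggregation: if f is a model such that there exists a copula C with F_{f(p)}(s) = C(F_{p₁}(s₁),...,F_{pₙ}(sₙ)) for all marginal tuples p and all s, then for all i, all j in [zᵢ−1], and all s, f(T_i^j(p))(s) = f(p)(s)·𝟙{sᵢ ≤ j} + f(p)(s + eⁱ)·𝟙{sᵢ ≥ j}. -/
/-! The joint CDF of a copula model is `C` applied to the marginal CDFs. Merging bins `j` and
`j + 1` of the `i`-th marginal only reindexes its CDF, `F_{T p}(t) = F_p(t + 1{t ≥ j})`, so the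
merged model has, at `t`, the CDF of `f(p)` at the shifted point. Shifting the bins of a joint pmf
in the same way gives the right-hand side of Invariant Aggregation the same CDF, and a pmf on a box
is determined by its CDF on the box: its mass at `s` is the CDF at `s` minus the masses strictly
below `s`, which are known by well-founded induction. -/

open MeasureTheory Finset Function

noncomputable section

/-- The uniform probability measure on `[0,1] ⊆ ℝ`. -/
def unif01 : Measure ℝ := volume.restrict (Set.Icc 0 1)

/-- `q` is a probability mass function on `[w] = {1,…,w}`. -/
def IsPMF (w : ℕ) (q : ℕ → ℝ) : Prop :=
  (∀ t, 0 ≤ q t) ∧ (∀ t, t ∉ Finset.Icc 1 w → q t = 0) ∧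
    ∑ t ∈ Finset.Icc 1 w, q t = 1

/-- Collapse of adjacent bins `j` and `j+1`: `q^j(t) = q(t)·1{t ≤ j} + q(t+1)·1{t ≥ j}`. -/
def collapsePM (j : ℕ) (q : ℕ → ℝ) : ℕ → ℝ :=
  fun t => (if t ≤ j then q t else 0) + (if j ≤ t then q (t + 1) else 0)

/-- CDF of a pmf on `{1,…,w}`. -/
def pmfCDF (q : ℕ → ℝ) (t : ℕ) : ℝ := ∑ s ∈ Finset.Icc 1 t, q s

/-- The product box `∏ᵢ {1,…,zᵢ}`. -/
def prodBox {n : ℕ} (z : Fin n → ℕ) : Finset (Fin n → ℕ) :=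
  Fintype.piFinset fun i => Finset.Icc 1 (z i)

/-- `μ` is a joint pmf on `∏ᵢ {1,…,zᵢ}`. -/
def IsJointPMF {n : ℕ} (z : Fin n → ℕ) (μ : (Fin n → ℕ) → ℝ) : Prop :=
  (∀ s, 0 ≤ μ s) ∧ (∀ s, s ∉ prodBox z → μ s = 0) ∧ ∑ s ∈ prodBox z, μ s = 1

/-- The `i`-th marginal of a joint pmf. -/
def jointMarginal {n : ℕ} (z : Fin n → ℕ) (μ : (Fin n → ℕ) → ℝ) (i : Fin n) (t : ℕ) : ℝ :=
  ∑ s ∈ (prodBox z).filter fun s => s i = t, μ s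

/-- Joint CDF of a joint pmf. -/
def jointCDF {n : ℕ} (μ : (Fin n → ℕ) → ℝ) (s : Fin n → ℕ) : ℝ :=
  ∑ t ∈ Fintype.piFinset fun i => Finset.Icc 1 (s i), μ t

/-- A (candidate) model: assigns to each `z` and tuple of marginals a joint pmf. -/
abbrev Model (n : ℕ) := (z : Fin n → ℕ) → (Fin n → ℕ → ℝ) → (Fin n → ℕ) → ℝ

/-- `f` is a model: it returns a joint pmf whose marginals are the inputs. -/
def IsModel {n : ℕ} (f : Model n) : Prop :=
  ∀ z p, (∀ i, IsPMF (z i) (p i)) →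
    IsJointPMF z (f z p) ∧ ∀ i t, jointMarginal z (f z p) i t = p i t

/-- Invariant Aggregation: merging adjacent bins `j, j+1` of marginal `i`
does not affect the joint distribution over unaffected values. -/
def SatisfiesIA {n : ℕ} (f : Model n) : Prop :=
  ∀ z p, (∀ i, IsPMF (z i) (p i)) → ∀ i : Fin n, ∀ j ∈ Finset.Icc 1 (z i - 1),
    ∀ s ∈ prodBox (Function.update z i (z i - 1)),
      f (Function.update z i (z i - 1)) (Function.update p i (collapsePM j (p i))) s =
        (if s i ≤ j then f z p s else 0) +
          (if j ≤ s i then f z p (Function.update s i (s i + 1)) else 0)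

/-- A copula measure: a probability measure on `[0,1]^ι` with standard uniform marginals. -/
def IsCopulaMeasure {ι : Type*} [Fintype ι] (μ : Measure (ι → ℝ)) : Prop :=
  IsProbabilityMeasure μ ∧ ∀ i : ι, μ.map (fun t => t i) = unif01

/-- `C` is a copula: the CDF of a probability measure with uniform marginals. -/
def IsCopula {ι : Type*} [Fintype ι] (C : (ι → ℝ) → ℝ) : Prop :=
  ∃ μ : Measure (ι → ℝ), IsCopulaMeasure μ ∧
    ∀ x : ι → ℝ, (∀ i, x i ∈ Set.Icc (0 : ℝ) 1) →
      (μ {t | ∀ i, t i ≤ x i}).toReal = C x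

/-- `f` is a copula model with copula `C`: `F_{f(p)}(s) = C(F_{p₁}(s₁),…,F_{pₙ}(sₙ))`. -/
def IsCopulaModelWith {n : ℕ} (f : Model n) (C : (Fin n → ℝ) → ℝ) : Prop :=
  IsCopula C ∧ ∀ z p, (∀ i, IsPMF (z i) (p i)) → ∀ s ∈ prodBox z,
    jointCDF (f z p) s = C fun i => pmfCDF (p i) (s i)

/-- The binary distribution `b_t` on `{1,2}` with `b_t(1) = t`, `b_t(2) = 1 - t`. -/
def binPMF (t : ℝ) : ℕ → ℝ := fun s => if s = 1 then t else if s = 2 then 1 - t else 0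

/-- `σ` is a permutation of `{1,…,w}` (fixing everything else). -/
def PermOn (w : ℕ) (σ : Equiv.Perm ℕ) : Prop := ∀ t ∉ Finset.Icc 1 w, σ t = t

/-- `M`-neutrality for `M = {i : (i : ℕ) < m}`: relabelling the bins of a marginal in `M`
just relabels the joint distribution accordingly. -/
def MNeutral {n : ℕ} (f : Model n) (m : ℕ) : Prop :=
  ∀ z p, (∀ i, IsPMF (z i) (p i)) → ∀ i : Fin n, (i : ℕ) < m →
    ∀ σ : Equiv.Perm ℕ, PermOn (z i) σ → ∀ s ∈ prodBox z,
      f z (Function.update p i fun t => p i (σ t)) s =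
        f z p (Function.update s i (σ (s i)))

/-- A coupling of two pmfs `q₁` on `[w₁]`, `q₂` on `[w₂]`. -/
def IsCoupling (w₁ w₂ : ℕ) (q₁ q₂ : ℕ → ℝ) (μ : ℕ × ℕ → ℝ) : Prop :=
  (∀ a, 0 ≤ μ a) ∧ (∀ a, a ∉ (Finset.Icc 1 w₁) ×ˢ (Finset.Icc 1 w₂) → μ a = 0) ∧
    (∀ s, ∑ t ∈ Finset.Icc 1 w₂, μ (s, t) = q₁ s) ∧
    (∀ t, ∑ s ∈ Finset.Icc 1 w₁, μ (s, t) = q₂ t)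

/-- Diagonal mass of a coupling. -/
def diagMass (w₁ w₂ : ℕ) (μ : ℕ × ℕ → ℝ) : ℝ :=
  ∑ s ∈ Finset.Icc 1 (min w₁ w₂), μ (s, s)

/-- A maximal coupling: a coupling maximizing the diagonal mass. -/
def IsMaxCoupling (w₁ w₂ : ℕ) (q₁ q₂ : ℕ → ℝ) (μ : ℕ × ℕ → ℝ) : Prop :=
  IsCoupling w₁ w₂ q₁ q₂ μ ∧
    ∀ ν, IsCoupling w₁ w₂ q₁ q₂ ν → diagMass w₁ w₂ ν ≤ diagMass w₁ w₂ μ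

lemma pmfCDF_succ (q : ℕ → ℝ) (t : ℕ) : pmfCDF q (t + 1) = pmfCDF q t + q (t + 1) :=
  sum_Icc_succ_top (by omega) q

lemma pmfCDF_collapsePM (q : ℕ → ℝ) {j : ℕ} (hj : 1 ≤ j) (t : ℕ) :
    pmfCDF (collapsePM j q) t = pmfCDF q (if j ≤ t then t + 1 else t) := by
  induction t with
  | zero => simp [pmfCDF, show ¬j ≤ 0 by omega]
  | succ t ih =>
    rw [pmfCDF_succ, ih, collapsePM]
    rcases lt_trichotomy (t + 1) j with h | rfl | h
    · simp [h.le, show ¬j ≤ t by omega, show ¬j ≤ t + 1 by omega, pmfCDF_succ]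
    · simp [pmfCDF_succ, add_assoc]
    · simp [show ¬t + 1 ≤ j by omega, show j ≤ t by omega, h.le, pmfCDF_succ]

lemma IsPMF.collapsePM {w j : ℕ} {q : ℕ → ℝ} (hq : IsPMF w q) (hj1 : 1 ≤ j) (hjw : j ≤ w - 1) :
    IsPMF (w - 1) (collapsePM j q) := by
  obtain ⟨hq0, hsupp, hq1⟩ := hq
  refine ⟨fun t => ?_, fun t ht => ?_, ?_⟩
  · unfold _root_.collapsePM
    split_ifs <;> linarith [hq0 t, hq0 (t + 1)]
  · rw [mem_Icc] at ht
    rcases Nat.eq_zero_or_pos t with rfl | ht0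
    · simp [_root_.collapsePM, hsupp 0 (by simp), show ¬j ≤ 0 by omega]
    · simp [_root_.collapsePM, hsupp (t + 1) (by simp; omega), show ¬t ≤ j by omega]
  · have h := pmfCDF_collapsePM q hj1 (w - 1)
    rw [if_pos hjw, Nat.sub_add_cancel (by omega)] at h
    exact h.trans hq1

lemma isPMF_update {ι : Type*} [DecidableEq ι] {z : ι → ℕ} {p : ι → ℕ → ℝ}
    (hp : ∀ k, IsPMF (z k) (p k)) (i : ι) {w : ℕ} {q : ℕ → ℝ} (hq : IsPMF w q) :
    ∀ k, IsPMF (update z i w k) (update p i q k) := by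
  intro k
  rcases eq_or_ne k i with rfl | hk
  · simpa
  · simpa [hk] using hp k

lemma le_iff_apply_le_and_forall_ne {ι : Type*} [DecidableEq ι] {π : ι → Type*}
    [∀ k, Preorder (π k)] {t s : ∀ k, π k} (i : ι) :
    t ≤ s ↔ t i ≤ s i ∧ ∀ k ≠ i, t k ≤ s k := by
  conv_lhs => rw [← update_eq_self i s]
  exact le_update_iff

section JointCDF

variable {n : ℕ}

lemma jointCDF_eq_sum_Icc (μ : (Fin n → ℕ) → ℝ) (s : Fin n → ℕ) :
    jointCDF μ s = ∑ t ∈ Icc 1 s, μ t := rfl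

lemma eqOn_Icc_of_jointCDF_eqOn_Icc {μ ν : (Fin n → ℕ) → ℝ} {z : Fin n → ℕ}
    (h : ∀ s ∈ Icc 1 z, jointCDF μ s = jointCDF ν s) : ∀ s ∈ Icc 1 z, μ s = ν s := by
  intro s
  induction s using WellFoundedLT.induction with
  | _ s ih =>
  intro hs
  obtain ⟨h1s, hsz⟩ := mem_Icc.1 hs
  have hCDF (ρ : (Fin n → ℕ) → ℝ) : jointCDF ρ s = ρ s + ∑ t ∈ Ico 1 s, ρ t := by
    rw [jointCDF_eq_sum_Icc, Icc_eq_cons_Ico h1s, sum_cons]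
  have hlower : ∑ t ∈ Ico 1 s, μ t = ∑ t ∈ Ico 1 s, ν t := by
    refine sum_congr rfl fun t ht => ?_
    obtain ⟨h1t, hts⟩ := mem_Ico.1 ht
    exact ih t hts (mem_Icc.2 ⟨h1t, hts.le.trans hsz⟩)
  linarith [hCDF μ, hCDF ν, h s hs]

lemma eq_of_jointCDF_eqOn_prodBox {μ ν : (Fin n → ℕ) → ℝ} {z : Fin n → ℕ}
    (hμ : ∀ s, s ∉ prodBox z → μ s = 0) (hν : ∀ s, s ∉ prodBox z → ν s = 0)
    (h : ∀ s ∈ prodBox z, jointCDF μ s = jointCDF ν s) : μ = ν := by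
  funext s
  by_cases hs : s ∈ prodBox z
  · exact eqOn_Icc_of_jointCDF_eqOn_Icc h s hs
  · rw [hμ s hs, hν s hs]

lemma sum_filter_Icc_update_succ (μ : (Fin n → ℕ) → ℝ) (i : Fin n) {j : ℕ} (hj : 1 ≤ j)
    (s : Fin n → ℕ) :
    ∑ t ∈ (Icc 1 s).filter (fun t => j ≤ t i), μ (update t i (t i + 1)) =
      ∑ t ∈ (Icc 1 (update s i (s i + 1))).filter (fun t => j < t i), μ t := by
  refine sum_nbij' (fun t => update t i (t i + 1)) (fun t => update t i (t i - 1))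
    ?_ ?_ ?_ ?_ fun _ _ => rfl
  · intro t ht
    simp only [mem_filter, mem_Icc, update_le_update_iff] at ht ⊢
    obtain ⟨⟨h1t, hts⟩, hjt⟩ := ht
    have : t i ≤ s i := hts i
    exact ⟨⟨le_update_iff.2 ⟨by simp, fun k _ => h1t k⟩, by omega, fun k _ => hts k⟩,
      by simp; omega⟩
  · intro t ht
    simp only [mem_filter, mem_Icc, le_update_iff] at ht ⊢
    obtain ⟨⟨h1t, hts, hts'⟩, hjt⟩ := ht
    exact ⟨⟨⟨by simp; omega, fun k _ => h1t k⟩, update_le_iff.2 ⟨by omega, hts'⟩⟩,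
      by simp; omega⟩
  · intro t _
    simp
  · intro t ht
    have : 1 ≤ t i := by simp only [mem_filter] at ht; omega
    simp [Nat.sub_add_cancel this]

/-- The right-hand side of `SatisfiesIA`. -/
def collapseAt (i : Fin n) (j : ℕ) (μ : (Fin n → ℕ) → ℝ) (s : Fin n → ℕ) : ℝ :=
  (if s i ≤ j then μ s else 0) + (if j ≤ s i then μ (update s i (s i + 1)) else 0)

lemma jointCDF_collapseAt (μ : (Fin n → ℕ) → ℝ) (i : Fin n) {j : ℕ} (hj : 1 ≤ j)
    (s : Fin n → ℕ) :
    jointCDF (collapseAt i j μ) s =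
      jointCDF μ (update s i (if j ≤ s i then s i + 1 else s i)) := by
  simp only [jointCDF_eq_sum_Icc, collapseAt, sum_add_distrib, ← sum_filter,
    sum_filter_Icc_update_succ μ i hj]
  split_ifs with hjs
  · rw [← sum_filter_add_sum_filter_not (Icc 1 (update s i (s i + 1))) (fun t => t i ≤ j)]
    simp only [not_le]
    congr 2
    ext t
    simp only [mem_filter, mem_Icc, le_update_iff, le_iff_apply_le_and_forall_ne i (s := s)]
    constructor <;> rintro ⟨⟨h1t, hti, hts⟩, htj⟩ <;> exact ⟨⟨h1t, by omega, hts⟩, htj⟩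
  · rw [update_eq_self, filter_true_of_mem, filter_false_of_mem, sum_empty, add_zero]
    · intro t ht
      have : t i ≤ s i + 1 := by simpa using (mem_Icc.1 ht).2 i
      omega
    · intro t ht
      have : t i ≤ s i := (mem_Icc.1 ht).2 i
      omega

lemma collapseAt_eq_zero_of_notMem_prodBox {z : Fin n → ℕ} {μ : (Fin n → ℕ) → ℝ}
    (hμ : ∀ s, s ∉ prodBox z → μ s = 0) {i : Fin n} {j : ℕ} (hj1 : 1 ≤ j) (hjz : j ≤ z i - 1)
    (s : Fin n → ℕ) (hs : s ∉ prodBox (update z i (z i - 1))) : collapseAt i j μ s = 0 := by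
  have hlow : (if s i ≤ j then μ s else 0) = 0 :=
      ite_eq_right_iff.2 fun hsj => hμ s fun hsz => hs <| by
    obtain ⟨h1s, hsz⟩ := mem_Icc.1 hsz
    exact mem_Icc.2 ⟨h1s, le_update_iff.2 ⟨by have := hsz i; omega, fun k _ => hsz k⟩⟩
  have hhigh : (if j ≤ s i then μ (update s i (s i + 1)) else 0) = 0 :=
      ite_eq_right_iff.2 fun hjs => hμ _ fun hsz => hs <| by
    obtain ⟨h1s, hsz⟩ := mem_Icc.1 hsz
    rw [le_update_iff] at h1s
    rw [update_le_iff] at hsz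
    exact mem_Icc.2 ⟨(le_iff_apply_le_and_forall_ne i).2 ⟨show 1 ≤ s i by omega, h1s.2⟩,
      le_update_iff.2 ⟨by omega, hsz.2⟩⟩
  rw [collapseAt, hlow, hhigh, add_zero]

lemma update_mem_prodBox_of_mem_prodBox_pred {z t : Fin n → ℕ} {i : Fin n}
    (ht : t ∈ prodBox (update z i (z i - 1))) (j : ℕ) :
    update t i (if j ≤ t i then t i + 1 else t i) ∈ prodBox z := by
  obtain ⟨h1t, htz⟩ := mem_Icc.1 ht
  rw [le_iff_apply_le_and_forall_ne i] at h1t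
  rw [le_update_iff] at htz
  have : 1 ≤ t i := h1t.1
  exact mem_Icc.2 ⟨le_update_iff.2 ⟨by split_ifs <;> omega, h1t.2⟩,
    update_le_iff.2 ⟨by split_ifs <;> omega, htz.2⟩⟩

end JointCDF

/-- every copula model satisfies Invariant Aggregation. -/
theorem copulaModel_satisfiesIA (n : ℕ) (f : Model n) (C : (Fin n → ℝ) → ℝ)
    (hf : IsModel f) (hC : IsCopulaModelWith f C) :
    SatisfiesIA f := by
  intro z p hp i j hj s _
  obtain ⟨hj1, hjz⟩ := mem_Icc.1 hj
  have hp' := isPMF_update hp i ((hp i).collapsePM hj1 hjz)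
  refine congrFun (eq_of_jointCDF_eqOn_prodBox (hf _ _ hp').1.2.1
    (collapseAt_eq_zero_of_notMem_prodBox (hf z p hp).1.2.1 hj1 hjz) fun t ht => ?_) s
  rw [hC.2 _ _ hp' t ht, jointCDF_collapseAt _ i hj1,
    hC.2 z p hp _ (update_mem_prodBox_of_mem_prodBox_pred ht j)]
  congr 1
  funext k
  rcases eq_or_ne k i with rfl | hk
  · simp [pmfCDF_collapsePM _ hj1]
  · simp [hk]
end
end

section
/- Let f be a model satisfying Invariant Aggregation and C(x) = F_{f(b_x)}(1,...,1) as above. Then C is coordinatewise nondecreasing on [0,1]ⁿ: if x ≤ y componentwise, then C(x) ≤ C(y). -/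
open MeasureTheory Finset Function

noncomputable section

/-!
Monotonicity is checked one coordinate at a time. To raise `xᵢ` to `c ≥ xᵢ`, replace the `i`-th
marginal by the three-point law with masses `xᵢ, c - xᵢ, 1 - c`. Merging its bins 2 and 3 gives
`b_{xᵢ}`, merging bins 1 and 2 gives `b_c`; by Invariant Aggregation the first merge leaves the mass
at `(1,…,1)` unchanged, while the second adds to it the (nonnegative) mass of the cell where the
`i`-th coordinate is 2.
-/

theorem le_of_forall_update_le {ι α β : Type*} [Fintype ι] [DecidableEq ι] [Preorder α]
    [Preorder β] {s : Set α} {g : (ι → α) → β}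
    (hg : ∀ x, (∀ i, x i ∈ s) → ∀ i, ∀ c ∈ s, x i ≤ c → g x ≤ g (update x i c))
    {x y : ι → α} (hx : ∀ i, x i ∈ s) (hy : ∀ i, y i ∈ s) (hxy : x ≤ y) : g x ≤ g y := by
  suffices ∀ S : Finset ι, g x ≤ g (S.piecewise y x) by
    simpa only [Finset.piecewise_univ] using this Finset.univ
  intro S
  induction S using Finset.induction_on with
  | empty => rw [Finset.piecewise_empty]
  | insert a S _ ih =>
    have hmem : ∀ i, S.piecewise y x i ∈ s := fun i => by
      by_cases h : i ∈ S <;> simp [Finset.piecewise, h, hx i, hy i]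
    have hle : S.piecewise y x a ≤ y a := by
      by_cases h : a ∈ S <;> simp [Finset.piecewise, h, hxy a]
    rw [Finset.piecewise_insert]
    exact ih.trans (hg _ hmem a (y a) (hy a) hle)

theorem binPMF_isPMF {t : ℝ} (h0 : 0 ≤ t) (h1 : t ≤ 1) : IsPMF 2 (binPMF t) := by
  refine ⟨fun s => ?_, fun s hs => ?_, ?_⟩
  · unfold binPMF; split_ifs <;> linarith
  · rcases s with _ | _ | _ | s <;> simp_all [binPMF]
  · simp [binPMF, Finset.sum_Icc_succ_top]

def triPMF (a c : ℝ) : ℕ → ℝ :=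
  fun s => if s = 1 then a else if s = 2 then c - a else if s = 3 then 1 - c else 0

theorem triPMF_isPMF {a c : ℝ} (h0 : 0 ≤ a) (h1 : a ≤ c) (h2 : c ≤ 1) :
    IsPMF 3 (triPMF a c) := by
  refine ⟨fun s => ?_, fun s hs => ?_, ?_⟩
  · unfold triPMF; split_ifs <;> linarith
  · rcases s with _ | _ | _ | _ | s <;> simp_all [triPMF]
  · simp [triPMF, Finset.sum_Icc_succ_top]

theorem collapsePM_two_triPMF (a c : ℝ) : collapsePM 2 (triPMF a c) = binPMF a := by
  funext t
  rcases t with _ | _ | _ | t <;> simp [collapsePM, triPMF, binPMF]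

theorem collapsePM_one_triPMF (a c : ℝ) : collapsePM 1 (triPMF a c) = binPMF c := by
  funext t
  rcases t with _ | _ | _ | t <;> simp [collapsePM, triPMF, binPMF]

namespace SatisfiesIA

variable {n : ℕ} {f : Model n} {z : Fin n → ℕ} {p : Fin n → ℕ → ℝ} {i : Fin n} {j : ℕ}
  {s : Fin n → ℕ}

theorem collapse_apply_of_lt (hIA : SatisfiesIA f) (hp : ∀ k, IsPMF (z k) (p k))
    (hj : j ∈ Finset.Icc 1 (z i - 1)) (hs : s ∈ prodBox (update z i (z i - 1))) (hsj : s i < j) :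
    f (update z i (z i - 1)) (update p i (collapsePM j (p i))) s = f z p s := by
  rw [hIA z p hp i j hj s hs, if_pos hsj.le, if_neg (by omega), add_zero]

theorem collapse_apply_self (hIA : SatisfiesIA f) (hp : ∀ k, IsPMF (z k) (p k))
    (hj : j ∈ Finset.Icc 1 (z i - 1)) (hs : s ∈ prodBox (update z i (z i - 1))) (hsj : s i = j) :
    f (update z i (z i - 1)) (update p i (collapsePM j (p i))) s =
      f z p s + f z p (update s i (j + 1)) := by
  rw [hIA z p hp i j hj s hs, if_pos hsj.le, if_pos hsj.ge, hsj]

theorem binPMF_ones_le_update (hf : IsModel f) (hIA : SatisfiesIA f) {x : Fin n → ℝ}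
    (hx : ∀ k, x k ∈ Set.Icc (0 : ℝ) 1) (i : Fin n) {c : ℝ} (hxc : x i ≤ c) (hc : c ≤ 1) :
    f (fun _ => 2) (binPMF ∘ x) (fun _ => 1) ≤
      f (fun _ => 2) (binPMF ∘ update x i c) (fun _ => 1) := by
  set z : Fin n → ℕ := update (fun _ => 2) i 3 with hz
  set p : Fin n → ℕ → ℝ := update (binPMF ∘ x) i (triPMF (x i) c) with hp
  have hpmf : ∀ k, IsPMF (z k) (p k) := by
    intro k
    rcases eq_or_ne k i with rfl | hk
    · simpa [z, p] using triPMF_isPMF (hx k).1 hxc hc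
    · simpa [z, p, hk] using binPMF_isPMF (hx k).1 (hx k).2
  have hzi : z i = 3 := by simp [z]
  have hz' : update z i (z i - 1) = fun _ => 2 := by
    rw [hzi, hz, update_idem, update_eq_self_iff]
  have hbox : (fun _ => 1) ∈ prodBox (update z i (z i - 1)) := by
    simp [hz', prodBox]
  have merge_upper : f (fun _ => 2) (binPMF ∘ x) (fun _ => 1) = f z p (fun _ => 1) := by
    have h := hIA.collapse_apply_of_lt hpmf (j := 2) (by simp [hzi]) hbox one_lt_two
    rwa [hz', hp, update_self, collapsePM_two_triPMF, update_idem, ← comp_update, update_eq_self]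
      at h
  have merge_lower : f (fun _ => 2) (binPMF ∘ update x i c) (fun _ => 1) =
      f z p (fun _ => 1) + f z p (update (fun _ => 1) i 2) := by
    have h := hIA.collapse_apply_self hpmf (j := 1) (by simp [hzi]) hbox rfl
    rwa [hz', hp, update_self, collapsePM_one_triPMF, update_idem, ← comp_update] at h
  rw [merge_upper, merge_lower]
  linarith [(hf z p hpmf).1.1 (update (fun _ => 1) i 2)]

end SatisfiesIA

/-- the function `C(x) = F_{f(b_x)}(1,…,1)` induced by an IA model is
coordinatewise nondecreasing on `[0,1]ⁿ`. -/
theorem IA_copula_monotone (n : ℕ) (f : Model n) (hf : IsModel f) (hIA : SatisfiesIA f)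
    (x y : Fin n → ℝ) (hx : ∀ i, x i ∈ Set.Icc (0 : ℝ) 1)
    (hy : ∀ i, y i ∈ Set.Icc (0 : ℝ) 1) (hxy : ∀ i, x i ≤ y i) :
    f (fun _ => 2) (fun i => binPMF (x i)) (fun _ => 1) ≤
      f (fun _ => 2) (fun i => binPMF (y i)) (fun _ => 1) :=
  le_of_forall_update_le (g := fun x => f (fun _ => 2) (binPMF ∘ x) (fun _ => 1))
    (fun _ hx' i _ hc hxc => hIA.binPMF_ones_le_update hf hx' i hxc hc.2) hx hy hxy
end
end

section
/- The maximal coupling model for n = 2 violates Invariant Aggregation: with p₁ = (1/2, 1/4, 1/4) on {1,2,3}, p₁' = (1/2, 1/4, 1/8, 1/8) on {1,2,3,4}, and p₂ = (1/4,1/4,1/4,1/4) on {1,2,3,4}, one has p₁ = (p₁')³ (collapsing bins 3 and 4 of p₁'), yet there exist couplings μ of (p₁,p₂) and μ' of (p₁',p₂), each maximizing the probability of the diagonal {(s,s)}, such that μ'(1,4) ≠ μ(1,4). -/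
open MeasureTheory Finset Function

noncomputable section

/-- The marginal `p₁ = (1/2, 1/4, 1/4)` on `{1,2,3}`. -/
def exP₁ : ℕ → ℝ := fun t => if t = 1 then 1/2 else if t = 2 then 1/4 else if t = 3 then 1/4 else 0

/-- The refined marginal `p₁' = (1/2, 1/4, 1/8, 1/8)` on `{1,2,3,4}`. -/
def exP₁' : ℕ → ℝ := fun t =>
  if t = 1 then 1/2 else if t = 2 then 1/4 else if t = 3 then 1/8 else if t = 4 then 1/8 else 0

/-- The marginal `p₂ = (1/4, 1/4, 1/4, 1/4)` on `{1,2,3,4}`. -/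
def exP₂ : ℕ → ℝ := fun t => if 1 ≤ t ∧ t ≤ 4 then 1/4 else 0

-- aux
lemma sumIcc14 (f : ℕ → ℝ) : ∑ t ∈ Finset.Icc 1 4, f t = f 1 + f 2 + f 3 + f 4 := by
  rw [show (Finset.Icc 1 4 : Finset ℕ) = {1,2,3,4} from rfl]
  simp [Finset.sum_insert, Finset.mem_insert]; ring
lemma sumIcc13 (f : ℕ → ℝ) : ∑ t ∈ Finset.Icc 1 3, f t = f 1 + f 2 + f 3 := by
  rw [show (Finset.Icc 1 3 : Finset ℕ) = {1,2,3} from rfl]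
  simp [Finset.sum_insert, Finset.mem_insert]; ring

def exμ : ℕ × ℕ → ℝ := fun a =>
  if a = (1,1) then 1/4 else if a = (2,2) then 1/4 else if a = (3,3) then 1/4 else
  if a = (1,4) then 1/4 else 0
def exμ' : ℕ × ℕ → ℝ := fun a =>
  if a = (1,1) then 1/4 else if a = (2,2) then 1/4 else if a = (3,3) then 1/8 else
  if a = (4,4) then 1/8 else if a = (1,3) then 1/8 else if a = (1,4) then 1/8 else 0

lemma cell_le_col {w₁ w₂ : ℕ} {q₁ q₂ : ℕ → ℝ} {ν : ℕ × ℕ → ℝ}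
    (h : IsCoupling w₁ w₂ q₁ q₂ ν) {s t : ℕ} (hs : s ∈ Finset.Icc 1 w₁) : ν (s, t) ≤ q₂ t := by
  rw [← h.2.2.2 t]
  exact Finset.single_le_sum (f := fun s => ν (s, t)) (fun i _ => h.1 _) hs

lemma cell_le_row {w₁ w₂ : ℕ} {q₁ q₂ : ℕ → ℝ} {ν : ℕ × ℕ → ℝ}
    (h : IsCoupling w₁ w₂ q₁ q₂ ν) {s t : ℕ} (ht : t ∈ Finset.Icc 1 w₂) : ν (s, t) ≤ q₁ s := by
  rw [← h.2.2.1 s]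
  exact Finset.single_le_sum (f := fun t => ν (s, t)) (fun i _ => h.1 _) ht

lemma exμ_coupling : IsCoupling 3 4 exP₁ exP₂ exμ := by
  refine ⟨fun a => by unfold exμ; split_ifs <;> norm_num, fun a ha => ?_, fun s => ?_, fun t => ?_⟩
  · unfold exμ
    split_ifs with h1 h2 h3 h4 <;> first
      | rfl
      | (subst ‹a = _›; exact absurd (by decide) ha)
  · rw [sumIcc14]
    by_cases h1 : s = 1
    · subst h1; norm_num [exμ, exP₁]
    by_cases h2 : s = 2
    · subst h2; norm_num [exμ, exP₁]
    by_cases h3 : s = 3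
    · subst h3; norm_num [exμ, exP₁]
    · simp [exμ, exP₁, Prod.ext_iff, h1, h2, h3]
  · rw [sumIcc13]
    by_cases h1 : t = 1
    · subst h1; norm_num [exμ, exP₂]
    by_cases h2 : t = 2
    · subst h2; norm_num [exμ, exP₂]
    by_cases h3 : t = 3
    · subst h3; norm_num [exμ, exP₂]
    by_cases h4 : t = 4
    · subst h4; norm_num [exμ, exP₂]
    · have hne : ¬(1 ≤ t ∧ t ≤ 4) := by omega
      simp [exμ, exP₂, Prod.ext_iff, h1, h2, h3, h4, hne]

lemma exμ'_coupling : IsCoupling 4 4 exP₁' exP₂ exμ' := by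
  refine ⟨fun a => by unfold exμ'; split_ifs <;> norm_num, fun a ha => ?_, fun s => ?_, fun t => ?_⟩
  · unfold exμ'
    split_ifs <;> first
      | rfl
      | (subst ‹a = _›; exact absurd (by decide) ha)
  · rw [sumIcc14]
    by_cases h1 : s = 1
    · subst h1; norm_num [exμ', exP₁']
    by_cases h2 : s = 2
    · subst h2; norm_num [exμ', exP₁']
    by_cases h3 : s = 3
    · subst h3; norm_num [exμ', exP₁']
    by_cases h4 : s = 4
    · subst h4; norm_num [exμ', exP₁']
    · simp [exμ', exP₁', Prod.ext_iff, h1, h2, h3, h4]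
  · rw [sumIcc14]
    by_cases h1 : t = 1
    · subst h1; norm_num [exμ', exP₂]
    by_cases h2 : t = 2
    · subst h2; norm_num [exμ', exP₂]
    by_cases h3 : t = 3
    · subst h3; norm_num [exμ', exP₂]
    by_cases h4 : t = 4
    · subst h4; norm_num [exμ', exP₂]
    · have hne : ¬(1 ≤ t ∧ t ≤ 4) := by omega
      simp [exμ', exP₂, Prod.ext_iff, h1, h2, h3, h4, hne]

/-- the maximal coupling model violates Invariant Aggregation:
`p₁` is the collapse of bins 3,4 of `p₁'`, yet there are maximal couplings `μ` of
`(p₁,p₂)` and `μ'` of `(p₁',p₂)` with `μ'(1,4) ≠ μ(1,4)`. -/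
theorem maximal_coupling_violates_IA :
    exP₁ = collapsePM 3 exP₁' ∧
    ∃ μ μ' : ℕ × ℕ → ℝ,
      IsMaxCoupling 3 4 exP₁ exP₂ μ ∧ IsMaxCoupling 4 4 exP₁' exP₂ μ' ∧
      μ' (1, 4) ≠ μ (1, 4) := by
  refine ⟨?_, exμ, exμ', ⟨exμ_coupling, ?_⟩, ⟨exμ'_coupling, ?_⟩, by norm_num [exμ, exμ']⟩
  · funext t
    by_cases h1 : t = 1
    · subst h1; norm_num [exP₁, exP₁', collapsePM]
    by_cases h2 : t = 2
    · subst h2; norm_num [exP₁, exP₁', collapsePM]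
    by_cases h3 : t = 3
    · subst h3; norm_num [exP₁, exP₁', collapsePM]
    by_cases h0 : t = 0
    · subst h0; norm_num [exP₁, exP₁', collapsePM]
    · have ha : ¬ t ≤ 3 := by omega
      have b1 : t + 1 ≠ 1 := by omega
      have b2 : t + 1 ≠ 2 := by omega
      have b3 : t + 1 ≠ 3 := by omega
      have b4 : t + 1 ≠ 4 := by omega
      simp [exP₁, exP₁', collapsePM, h1, h2, h3, h0, ha, b1, b2, b3, b4]
  · intro ν hν
    have e1 : ν (1,1) ≤ 1/4 := by
      have := cell_le_col hν (s := 1) (t := 1) (by decide); simpa [exP₂] using this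
    have e2 : ν (2,2) ≤ 1/4 := by
      have := cell_le_col hν (s := 2) (t := 2) (by decide); simpa [exP₂] using this
    have e3 : ν (3,3) ≤ 1/4 := by
      have := cell_le_col hν (s := 3) (t := 3) (by decide); simpa [exP₂] using this
    have hd : diagMass 3 4 exμ = 3/4 := by
      rw [diagMass, show min 3 4 = 3 from rfl, sumIcc13]; norm_num [exμ]
    rw [hd, diagMass, show min 3 4 = 3 from rfl, sumIcc13]
    linarith
  · intro ν hν
    have e1 : ν (1,1) ≤ 1/4 := by
      have := cell_le_col hν (s := 1) (t := 1) (by decide); simpa [exP₂] using this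
    have e2 : ν (2,2) ≤ 1/4 := by
      have := cell_le_col hν (s := 2) (t := 2) (by decide); simpa [exP₂] using this
    have e3 : ν (3,3) ≤ 1/8 := by
      have := cell_le_row hν (s := 3) (t := 3) (by decide); simpa [exP₁'] using this
    have e4 : ν (4,4) ≤ 1/8 := by
      have := cell_le_row hν (s := 4) (t := 4) (by decide); simpa [exP₁'] using this
    have hd : diagMass 4 4 exμ' = 3/4 := by
      rw [diagMass, show min 4 4 = 4 from rfl, sumIcc14]; norm_num [exμ']
    rw [hd, diagMass, show min 4 4 = 4 from rfl, sumIcc14]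
    linarith
end
end
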